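/- Every prime ideal of A ⋈^f J is of the form q̄^f for some prime ideal q of B with J ⊄ q, or of the form p′^f for some prime ideal p of A, where q̄^f := {(a, f(a)+j) | a ∈ A, j ∈ J, f(a)+j ∈ q} and p′^f := {(p, f(p)+j) | p ∈ p, j ∈ J}. -/

import Mathlib

set_option synthInstance.maxHeartbeats 1000000
set_option maxHeartbeats 1000000
/-- The amalgamation `A ⋈^f J` of `A` with `B` along `J` with respect to `f`,
as a subring of `A × B`. -/
def Amalg {A B : Type*} [CommRing A] [CommRing B] (f : A →+* B) (J : Ideal B) :
    Subring (A × B) where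
  carrier := {p | ∃ a : A, ∃ j ∈ J, p = (a, f a + j)}
  zero_mem' := ⟨0, 0, J.zero_mem, by ext <;> simp⟩
  one_mem' := ⟨1, 0, J.zero_mem, by ext <;> simp⟩
  add_mem' := by
    rintro _ _ ⟨a, j, hj, rfl⟩ ⟨a', j', hj', rfl⟩
    exact ⟨a + a', j + j', J.add_mem hj hj', by simp [Prod.ext_iff]; ring⟩
  neg_mem' := by
    rintro _ ⟨a, j, hj, rfl⟩
    exact ⟨-a, -j, J.neg_mem hj, by simp [Prod.ext_iff]; ring⟩
  mul_mem' := by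
    rintro _ _ ⟨a, j, hj, rfl⟩ ⟨a', j', hj', rfl⟩
    refine ⟨a * a', f a * j' + f a' * j + j * j',
      J.add_mem (J.add_mem (J.mul_mem_left _ hj') (J.mul_mem_left _ hj))
        (J.mul_mem_left _ hj'), by simp [Prod.ext_iff]; ring⟩

/-!
The kernel of the projection `A ⋈^f J → A` is `0 × J`. A prime `P` containing it is the
preimage of a prime of `A`. Otherwise pick `(0, j₀) ∉ P`: since `x * (0, j₀) = (0, x.2 * j₀)`,
membership of `x` in `P` depends only on its second coordinate, and `P` is the preimage of the
prime `{b | (0, b J) ⊆ P}` of `B`, which misses `j₀`.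
-/

namespace Amalg

variable {A B : Type*} [CommRing A] [CommRing B] {f : A →+* B} {J : Ideal B}

def fst : Amalg f J →+* A := (RingHom.fst A B).comp (Amalg f J).subtype

def snd : Amalg f J →+* B := (RingHom.snd A B).comp (Amalg f J).subtype

@[simp] lemma fst_apply (x : Amalg f J) : fst x = (x : A × B).1 := rfl

@[simp] lemma snd_apply (x : Amalg f J) : snd x = (x : A × B).2 := rfl

lemma fst_surjective : Function.Surjective (fst : Amalg f J →+* A) :=
  fun a => ⟨⟨(a, f a), a, 0, J.zero_mem, by simp⟩, rfl⟩

lemma exists_eq_iff_fst_mem (p : Ideal A) (x : Amalg f J) :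
    (∃ a ∈ p, ∃ j ∈ J, (x : A × B) = (a, f a + j)) ↔ fst x ∈ p := by
  constructor
  · rintro ⟨a, ha, j, -, hx⟩
    simpa [hx] using ha
  · intro hx
    obtain ⟨a, j, hj, hxa⟩ := x.2
    exact ⟨a, by simpa [hxa] using hx, j, hj, hxa⟩

def inr : J →+ Amalg f J where
  toFun j := ⟨(0, j), 0, j, j.2, by simp⟩
  map_zero' := rfl
  map_add' j j' := by ext <;> simp

@[simp] lemma inr_coe (j : J) : ((inr j : Amalg f J) : A × B) = (0, (j : B)) := rfl

lemma mul_inr (x : Amalg f J) (j : J) : x * inr j = inr (snd x • j) := by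
  ext <;> simp

lemma inr_mul_inr (j j' : J) : (inr j * inr j' : Amalg f J) = inr ((j : B) • j') :=
  mul_inr _ _

lemma ker_fst_le {P : Ideal (Amalg f J)} (h : ∀ j, inr j ∈ P) : RingHom.ker fst ≤ P := by
  intro x hx
  obtain ⟨a, j, hj, hxa⟩ := x.2
  have ha : a = 0 := by simpa [hxa] using (RingHom.mem_ker.mp hx)
  convert h ⟨j, hj⟩
  ext <;> simp [hxa, ha]

lemma exists_isPrime_eq_comap_fst {P : Ideal (Amalg f J)} [P.IsPrime] (h : ∀ j, inr j ∈ P) :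
    ∃ p : Ideal A, p.IsPrime ∧ P = p.comap (fst : Amalg f J →+* A) :=
  ⟨P.map fst, Ideal.map_isPrime_of_surjective fst_surjective (ker_fst_le h), by
    rw [Ideal.comap_map_of_surjective' _ (fst_surjective (f := f)),
      sup_eq_left.mpr (ker_fst_le h)]⟩

def inrColon (P : Ideal (Amalg f J)) : Ideal B where
  carrier := {b | ∀ j : J, inr (b • j) ∈ P}
  zero_mem' _ := by simp
  add_mem' hb hb' j := by simpa [add_smul] using P.add_mem (hb j) (hb' j)
  smul_mem' c b hb j := by rw [smul_eq_mul, mul_comm, mul_smul]; exact hb (c • j)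

variable {P : Ideal (Amalg f J)} [hP : P.IsPrime] {j₀ : J}

lemma comap_snd_inrColon (hj₀ : inr j₀ ∉ P) : (inrColon P).comap snd = P := by
  ext x
  refine ⟨fun hx => ?_, fun hx j => mul_inr x j ▸ P.mul_mem_right _ hx⟩
  have hxj₀ : x * inr j₀ ∈ P := mul_inr x j₀ ▸ hx j₀
  exact (hP.mem_or_mem hxj₀).resolve_right hj₀

lemma inrColon_isPrime (hj₀ : inr j₀ ∉ P) : (inrColon P).IsPrime := by
  refine ⟨fun htop => hj₀ ?_, fun {b b'} hbb' => ?_⟩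
  · simpa using (htop ▸ Submodule.mem_top : (1 : B) ∈ inrColon P) j₀
  · by_contra! h
    obtain ⟨⟨j, hj⟩, ⟨j', hj'⟩⟩ := And.imp not_forall.mp not_forall.mp h
    have hprod : inr (b • j) * inr (b' • j') ∈ P := by
      rw [inr_mul_inr]
      convert hbb' ((j : B) • j') using 2
      ext; simp only [SetLike.val_smul, smul_eq_mul]; ring
    exact (hP.mem_or_mem hprod).elim hj hj'

lemma not_le_inrColon (hj₀ : inr j₀ ∉ P) : ¬ J ≤ inrColon P := fun hJ =>
  have hsq : inr j₀ * inr j₀ ∈ P := inr_mul_inr (f := f) j₀ j₀ ▸ hJ j₀.2 j₀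
  hj₀ ((hP.mem_or_mem hsq).elim id id)

end Amalg

open Amalg in
/-- Every prime ideal of `A ⋈^f J` is of the form `q̄^f` for a prime `q` of `B`
not containing `J`, or of the form `p′^f` for a prime `p` of `A`. -/
theorem amalgamation_primes_classification {A B : Type*} [CommRing A] [CommRing B]
    (f : A →+* B) (J : Ideal B) (P : Ideal (Amalg f J)) (hP : P.IsPrime) :
    (∃ q : Ideal B, q.IsPrime ∧ ¬ J ≤ q ∧
        (P : Set (Amalg f J)) = {x : Amalg f J | (x : A × B).2 ∈ q}) ∨
    (∃ p : Ideal A, p.IsPrime ∧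
        (P : Set (Amalg f J)) =
          {x : Amalg f J | ∃ a ∈ p, ∃ j ∈ J, (x : A × B) = (a, f a + j)}) := by
  by_cases h : ∀ j, inr j ∈ P
  · obtain ⟨p, hp, rfl⟩ := exists_isPrime_eq_comap_fst h
    refine .inr ⟨p, hp, ?_⟩
    ext x
    exact (exists_eq_iff_fst_mem p x).symm
  · obtain ⟨j₀, hj₀⟩ := not_forall.mp h
    refine .inl ⟨inrColon P, inrColon_isPrime hj₀, not_le_inrColon hj₀, ?_⟩
    exact congrArg SetLike.coe (comap_snd_inrColon hj₀).symm
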